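/- arXiv:1605.04147 — 2 statements merged into one kernel-verified Lean document; each statement's English description precedes it below -/
import Mathlib

section
/- Let h₀: C^∞(M_nice) → C^∞(M_nice, g) be the homotopy of the classical Koszul complex defined by (h₀ f)(p) = e_a ⊗ ∫₀¹ ∂(f ∘ Φ⁻¹)/∂μ_a (c, tμ) dt, where Φ(p) = (c, μ). Then prol ι* + δ₁ h₀ = id on C^∞(M_nice), where δ₁ = ι(J) is the Koszul differential (insertion of the momentum map) and prol, ι* are the prolongation and restriction maps. In particular ι* δ₁ = 0 and the Koszul complex is a free resolution of C^∞(C) in degree 0. -/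
/-!
Statement 8: Let `h₀ : C^∞(M_nice) → C^∞(M_nice, g)` be the homotopy of the classical
Koszul complex defined by `(h₀ f)(p) = e_a ⊗ ∫₀¹ ∂(f ∘ Φ⁻¹)/∂μ_a (c, tμ) dt` where
`Φ(p) = (c, μ)`.  Then `prol ι^* + δ₁ h₀ = id` on `C^∞(M_nice)`, where `δ₁ = ι(J)` is
the Koszul differential (insertion of the momentum map) and `prol`, `ι^*` are the
prolongation and restriction maps.  In particular `ι^* δ₁ = 0` and the Koszul complex
is a free resolution of `C^∞(C)` in degree `0`.

We work in the nice local model: `M_nice ≅ U_nice ⊆ C × g^*` via the `G`-equivariant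
diffeomorphism `Φ` (so we may take `Φ = id`), with `U_nice` star-shaped in each fibre
(we take all of `C × g^* ≅ C × ℝⁿ`), the momentum map `J = pr₂` and a basis
`e_1, …, e_n` of `g` with dual coordinates `μ_a`.  Everything is then concrete:
functions on `M_nice` are functions on `C × ℝⁿ`, fibrewise smooth.
-/

open intervalIntegral

lemma main_aux {n : ℕ} (F : (Fin n → ℝ) → ℝ) (hF : ContDiff ℝ (⊤ : ℕ∞) F) (μ : Fin n → ℝ) :
    F 0 + ∑ a, μ a * ∫ t in (0:ℝ)..1, fderiv ℝ F (t • μ) (Pi.single a 1) = F μ := by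
  have hcont : ∀ v : Fin n → ℝ, Continuous fun t : ℝ => fderiv ℝ F (t • μ) v := by
    intro v
    exact ((ContinuousLinearMap.apply ℝ ℝ v).continuous.comp
      (hF.continuous_fderiv (by simp))).comp (continuous_id.smul continuous_const)
  have hderiv : ∀ t : ℝ, HasDerivAt (fun t : ℝ => F (t • μ)) (fderiv ℝ F (t • μ) μ) t := by
    intro t
    have h1 : HasFDerivAt F (fderiv ℝ F (t • μ)) (t • μ) :=
      (hF.differentiable (by simp) (t • μ)).hasFDerivAt
    have h2 : HasDerivAt (fun t : ℝ => t • μ) μ t := by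
      simpa using (hasDerivAt_id t).smul_const μ
    exact h1.comp_hasDerivAt t h2
  have hsub : (∫ t in (0:ℝ)..1, fderiv ℝ F (t • μ) μ) = F μ - F 0 := by
    have := integral_eq_sub_of_hasDerivAt (fun t _ => hderiv t)
      ((hcont μ).intervalIntegrable 0 1)
    simpa using this
  have hsum : ∑ a, μ a * (∫ t in (0:ℝ)..1, fderiv ℝ F (t • μ) (Pi.single a 1))
      = ∫ t in (0:ℝ)..1, fderiv ℝ F (t • μ) μ := by
    have h1 : ∀ a : Fin n, μ a * (∫ t in (0:ℝ)..1, fderiv ℝ F (t • μ) (Pi.single a 1))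
        = ∫ t in (0:ℝ)..1, μ a * fderiv ℝ F (t • μ) (Pi.single a 1) := by
      intro a; rw [intervalIntegral.integral_const_mul]
    rw [Finset.sum_congr rfl fun a _ => h1 a,
      ← intervalIntegral.integral_finset_sum (fun a _ =>
        (show IntervalIntegrable (fun t => μ a * fderiv ℝ F (t • μ) (Pi.single a 1)) MeasureTheory.volume 0 1 from
          (continuous_const.mul (hcont (Pi.single a 1))).intervalIntegrable 0 1))]
    congr 1; funext t
    have : (fderiv ℝ F (t • μ)) μ = (fderiv ℝ F (t • μ)) (∑ a, μ a • (Pi.single a 1 : Fin n → ℝ)) := by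
      congr 1; funext j; simp [Finset.sum_apply, Pi.single_apply, eq_comm]
    rw [this, map_sum]
    simp [smul_eq_mul]
  rw [hsum, hsub]; ring

variable (n : ℕ) (C : Type*)

/-- Restriction `ι^*` to the zero level set `C = J⁻¹({0}) = C × {0}`. -/
def restr (f : C × (Fin n → ℝ) → ℝ) : C → ℝ := fun c => f (c, 0)

/-- Prolongation `prol = (pr₁ ∘ Φ)^*`. -/
def prol (φ : C → ℝ) : C × (Fin n → ℝ) → ℝ := fun p => φ p.1

/-- The Koszul homotopy `h₀`: `(h₀ f)_a (c, μ) = ∫₀¹ (∂f/∂μ_a)(c, tμ) dt`. -/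
noncomputable def h0 (f : C × (Fin n → ℝ) → ℝ) : Fin n → C × (Fin n → ℝ) → ℝ :=
  fun a p => ∫ t in (0 : ℝ)..1,
    fderiv ℝ (fun μ : Fin n → ℝ => f (p.1, μ)) (t • p.2) (Pi.single a 1)

/-- The Koszul differential `δ₁ = ι(J)`: insertion of the momentum map `J = pr₂`,
`δ₁ x = Σ_a J_a x_a` with `J_a (c, μ) = μ_a`. -/
def koszulδ (x : Fin n → C × (Fin n → ℝ) → ℝ) : C × (Fin n → ℝ) → ℝ :=
  fun p => ∑ a, p.2 a * x a p

/-- `prol ι^* + δ₁ h₀ = id` on (fibrewise smooth) functions on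
`M_nice`; in particular `ι^* δ₁ = 0` and the Koszul complex is a resolution of
`C^∞(C)` in degree `0` (`ker ι^* = im δ₁`, and `ι^*` is surjective since
`ι^* ∘ prol = id`). -/
theorem koszul_homotopy_identity :
    (∀ f : C × (Fin n → ℝ) → ℝ,
      (∀ c : C, ContDiff ℝ (⊤ : ℕ∞) fun μ : Fin n → ℝ => f (c, μ)) →
      prol n C (restr n C f) + koszulδ n C (h0 n C f) = f) ∧
    (∀ x : Fin n → C × (Fin n → ℝ) → ℝ, restr n C (koszulδ n C x) = 0) ∧
    (∀ φ : C → ℝ, restr n C (prol n C φ) = φ) ∧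
    (∀ f : C × (Fin n → ℝ) → ℝ,
      (∀ c : C, ContDiff ℝ (⊤ : ℕ∞) fun μ : Fin n → ℝ => f (c, μ)) →
      restr n C f = 0 → ∃ x, koszulδ n C x = f) := by
  
  refine ⟨?_, ?_, ?_, ?_⟩
  · intro f hf
    funext p
    obtain ⟨c, μ⟩ := p
    have := main_aux (fun ν : Fin n → ℝ => f (c, ν)) (hf c) μ
    simpa [prol, restr, koszulδ, h0] using this
  · intro x; funext c; simp [restr, koszulδ]
  · intro φ; funext c; rfl
  · intro f hf hr
    refine ⟨h0 n C f, ?_⟩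
    funext p
    obtain ⟨c, μ⟩ := p
    have h1 := main_aux (fun ν : Fin n → ℝ => f (c, ν)) (hf c) μ
    have h0' : f (c, 0) = 0 := congrFun hr c
    simp only [h0'] at h1
    simpa [koszulδ, h0] using h1
end

section
/- Let Φ = ∏_{k=1}^∞ φ where φ: Z_g(P) → Z_g(P) is defined on d_g-closed equivariant forms on a principal G-bundle P by φ(α) = α − d_g h_ω α, with h_ω applied to the component of maximal symmetric degree. Then Φ is well-defined (the product stabilizes after at most k applications on forms of maximal symmetric degree k), Φ induces the identity on equivariant cohomology, and the image of Φ is contained in the closed basic forms Z_bas(P). -/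
/-!
Statement 13: Let `Φ = ∏_{k=1}^∞ φ` where `φ : Z_g(P) → Z_g(P)` is defined on
`d_g`-closed equivariant forms on a principal `G`-bundle `P` by
`φ(α) = α − d_g (h_ω α_top)`, with `h_ω` applied to the component of maximal symmetric
degree.  Then `Φ` is well-defined (the product stabilises after at most `k` applications
on forms of maximal symmetric degree `k`), `Φ` induces the identity on equivariant
cohomology, and the image of `Φ` is contained in the closed basic forms `Z_bas(P)`.

The Cartan complex is axiomatised; `φ` is modelled by `step k`, which subtracts
`d_g` applied to `h_ω` of the symmetric-degree-`(k+1)` component.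
-/

/-- The Cartan complex of equivariant differential forms of a `G`-manifold `P`,
graded by the symmetric degree: `A i = [Sym^i(g^*) ⊗ Ω(P)]^G` (all exterior degrees
collected), with the two parts `d` (de Rham differential) and `ι` (insertion of
fundamental vector fields, raising the symmetric degree) of the Cartan differential
`d_g = d + ι_•`. -/
structure CartanComplexData where
  /-- `A i = [Sym^i(g^*) ⊗ Ω(P)]^G` -/
  A : ℕ → Type*
  [ab : ∀ i, AddCommGroup (A i)]
  /-- the de Rham part of the Cartan differential -/
  d : ∀ i, A i →+ A i
  /-- the insertion part `ι_•` of the Cartan differential -/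
  ι : ∀ i, A i →+ A (i + 1)
  d_sq : ∀ i a, d i (d i a) = 0
  ι_sq : ∀ i a, ι (i + 1) (ι i a) = 0
  d_ι : ∀ i a, d (i + 1) (ι i a) + ι i (d i a) = 0

attribute [instance] CartanComplexData.ab

namespace CartanComplexData

variable (D : CartanComplexData)

/-- The total Cartan differential `d_g = d + ι_•` on families of components. -/
def Dg (x : ∀ i, D.A i) : ∀ i, D.A i
  | 0 => D.d 0 (x 0)
  | (i + 1) => D.d (i + 1) (x (i + 1)) + D.ι i (x i)

/-- The family `x` has bounded symmetric degree (an equivariant differential form). -/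
def FinSupp (x : ∀ i, D.A i) : Prop := ∃ N, ∀ i, N ≤ i → x i = 0

/-- `x` is `d_g`-closed. -/
def Closed (x : ∀ i, D.A i) : Prop := ∀ i, D.Dg x i = 0

/-- `x` is `d_g`-exact. -/
def Exact (x : ∀ i, D.A i) : Prop := ∃ y, D.FinSupp y ∧ D.Dg y = x

/-- The inclusion of symmetric degree `0` elements into the total complex. -/
def emb (a : D.A 0) : ∀ i, D.A i := Function.update (fun i => (0 : D.A i)) 0 a

end CartanComplexData

/-- A `G`-principal bundle `π : P → B` together with its Cartan complex, the de Rham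
complex of the base, the pullback `π^*` (which is a chain isomorphism onto the basic
forms, i.e. the `ι_•`-closed part of symmetric degree `0`), and the contraction `h_ω`
associated to a principal connection `ω`. -/
structure CartanPrincipalData extends CartanComplexData where
  /-- de Rham complex (total) of the base `B = P/G` -/
  B : Type*
  [abB : AddCommGroup B]
  /-- de Rham differential of the base -/
  dB : B →+ B
  dB_sq : ∀ b, dB (dB b) = 0
  /-- the pullback `π^*`, landing in symmetric degree `0` -/
  pull : B →+ A 0
  pull_chain : ∀ b, pull (dB b) = d 0 (pull b)
  pull_basic : ∀ b, ι 0 (pull b) = 0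
  pull_inj : Function.Injective pull
  /-- `π^*` maps `Ω(B)` onto the basic forms -/
  pull_surj : ∀ a : A 0, ι 0 a = 0 → ∃ b, pull b = a
  /-- the contraction associated to a principal connection `ω` on `P` -/
  h : ∀ i, A (i + 1) →+ A i
  /-- `ι_• h_ω + h_ω ι_• = id` in positive symmetric degree: the columns of the
  Cartan double complex are exact -/
  homotopy : ∀ i (a : A (i + 1)), ι i (h i a) + h (i + 1) (ι (i + 1) a) = a

attribute [instance] CartanPrincipalData.abB

/-- One application of `φ`: subtract `d_g h_ω (α_{k+1})`, where `α_{k+1}` is the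
component of symmetric degree `k+1`. -/
def CartanPrincipalData.step (D : CartanPrincipalData) (k : ℕ)
    (x : ∀ i, D.A i) : ∀ i, D.A i :=
  fun i => x i -
    D.toCartanComplexData.Dg
      (Function.update (fun j => (0 : D.A j)) k (D.h k (x (k + 1)))) i

/-- The composite `φ ∘ φ ∘ ⋯` applied from maximal symmetric degree `N` downwards:
`downSteps N = step 0 ∘ step 1 ∘ ⋯ ∘ step N`. -/
def CartanPrincipalData.downSteps (D : CartanPrincipalData) :
    ℕ → (∀ i, D.A i) → ∀ i, D.A i
  | 0 => D.step 0
  | (k + 1) => fun x => D.downSteps k (D.step (k + 1) x)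


namespace CartanComplexData

variable (D : CartanComplexData)

theorem Dg_sub (x y : ∀ i, D.A i) :
    D.Dg (fun i => x i - y i) = fun i => D.Dg x i - D.Dg y i := by
  funext i
  cases i with
  | zero => simp [Dg, map_sub]
  | succ n =>
    show D.d (n+1) (x (n+1) - y (n+1)) + D.ι n (x n - y n) = _
    simp only [map_sub, Dg]
    abel

theorem Dg_add (x y : ∀ i, D.A i) :
    D.Dg (fun i => x i + y i) = fun i => D.Dg x i + D.Dg y i := by
  funext i
  cases i with
  | zero => simp [Dg, map_add]
  | succ n =>
    show D.d (n+1) (x (n+1) + y (n+1)) + D.ι n (x n + y n) = _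
    simp only [map_add, Dg]
    abel

theorem Dg_zero : D.Dg (fun i => (0 : D.A i)) = fun i => 0 := by
  funext i
  cases i with
  | zero => simp [Dg]
  | succ n =>
    show D.d (n+1) 0 + D.ι n 0 = 0
    simp

theorem Dg_sq (x : ∀ i, D.A i) : D.Dg (D.Dg x) = fun i => 0 := by
  funext i
  match i with
  | 0 => show D.d 0 (D.d 0 (x 0)) = 0; exact D.d_sq 0 (x 0)
  | 1 =>
    show D.d 1 (D.d 1 (x 1) + D.ι 0 (x 0)) + D.ι 0 (D.d 0 (x 0)) = 0
    simp only [map_add, D.d_sq, zero_add]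
    exact D.d_ι 0 (x 0)
  | (n+2) =>
    show D.d (n+2) (D.d (n+2) (x (n+2)) + D.ι (n+1) (x (n+1)))
        + D.ι (n+1) (D.d (n+1) (x (n+1)) + D.ι n (x n)) = 0
    simp only [map_add, D.d_sq, D.ι_sq, zero_add, add_zero]
    exact D.d_ι (n+1) (x (n+1))

theorem Exact.add' {x y : ∀ i, D.A i} (hx : D.Exact x) (hy : D.Exact y) :
    D.Exact (fun i => x i + y i) := by
  obtain ⟨a, ⟨Na, ha⟩, rfl⟩ := hx
  obtain ⟨b, ⟨Nb, hb⟩, rfl⟩ := hy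
  refine ⟨fun i => a i + b i, ⟨max Na Nb, fun i hi => ?_⟩, ?_⟩
  · show a i + b i = 0
    rw [ha i (le_trans (le_max_left _ _) hi), hb i (le_trans (le_max_right _ _) hi),
      add_zero]
  · exact D.Dg_add a b

end CartanComplexData

namespace CartanPrincipalData

variable (D : CartanPrincipalData)

/-- The auxiliary family used in `step`. -/
def Y (k : ℕ) (x : ∀ i, D.A i) : ∀ i, D.A i :=
  Function.update (fun j => (0 : D.A j)) k (D.h k (x (k + 1)))

theorem step_eq (k : ℕ) (x : ∀ i, D.A i) :
    D.step k x = fun i => x i - D.toCartanComplexData.Dg (D.Y k x) i := rfl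

theorem step_closed (k : ℕ) (x : ∀ i, D.A i)
    (hx : D.toCartanComplexData.Closed x) :
    D.toCartanComplexData.Closed (D.step k x) := by
  intro i
  rw [step_eq, D.toCartanComplexData.Dg_sub]
  show D.toCartanComplexData.Dg x i
      - D.toCartanComplexData.Dg (D.toCartanComplexData.Dg (D.Y k x)) i = 0
  rw [hx i, congrFun (D.toCartanComplexData.Dg_sq (D.Y k x)) i, sub_zero]

theorem Y_supp (k : ℕ) (x : ∀ i, D.A i) : ∀ i, k + 1 ≤ i → D.Y k x i = 0 := by
  intro i hi
  have : i ≠ k := by omega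
  simp [Y, Function.update_apply, this]

theorem step_exact (k : ℕ) (x : ∀ i, D.A i) :
    D.toCartanComplexData.Exact (fun i => x i - D.step k x i) := by
  refine ⟨D.Y k x, ⟨k + 1, D.Y_supp k x⟩, ?_⟩
  funext i
  rw [step_eq]
  exact (sub_sub_cancel _ _).symm

theorem step_supp (k : ℕ) (x : ∀ i, D.A i)
    (hs : ∀ i, k + 1 ≤ i → x i = 0) :
    ∀ i, k + 1 ≤ i → D.step k x i = 0 := by
  have hY : D.Y k x = fun j => (0 : D.A j) := by
    funext j
    by_cases hj : j = k
    · rw [hj]; simp [Y, hs (k+1) le_rfl]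
    · simp [Y, Function.update_apply, hj]
  intro i hi
  rw [step_eq]
  simp [hY, congrFun (D.toCartanComplexData.Dg_zero) i, hs i hi]

theorem step_reduce (k : ℕ) (x : ∀ i, D.A i)
    (hx : D.toCartanComplexData.Closed x)
    (hs : ∀ i, k + 2 ≤ i → x i = 0) :
    ∀ i, k + 1 ≤ i → D.step k x i = 0 := by
  intro i hi
  rcases eq_or_lt_of_le hi with hik | hik
  · -- i = k + 1
    subst hik
    have hY1 : D.Y k x (k + 1) = 0 := D.Y_supp k x (k + 1) le_rfl
    have hDg : D.toCartanComplexData.Dg (D.Y k x) (k + 1)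
        = D.ι k (D.h k (x (k + 1))) := by
      show D.d (k+1) (D.Y k x (k+1)) + D.ι k (D.Y k x k) = _
      rw [hY1, map_zero, zero_add]
      simp [Y]
    have hιx : D.ι (k + 1) (x (k + 1)) = 0 := by
      have h2 := hx (k + 2)
      have : D.toCartanComplexData.Dg x (k+2)
          = D.d (k+2) (x (k+2)) + D.ι (k+1) (x (k+1)) := rfl
      rw [this, hs (k+2) le_rfl, map_zero, zero_add] at h2
      exact h2
    rw [step_eq]
    show x (k+1) - D.toCartanComplexData.Dg (D.Y k x) (k+1) = 0
    rw [hDg, sub_eq_zero]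
    have := D.homotopy k (x (k + 1))
    rw [hιx, map_zero, add_zero] at this
    exact this.symm
  · -- k + 2 ≤ i
    obtain ⟨j, rfl⟩ : ∃ j, i = j + 1 := ⟨i - 1, by omega⟩
    have hj : k + 1 ≤ j := by omega
    rw [step_eq]
    show x (j+1) - (D.d (j+1) (D.Y k x (j+1)) + D.ι j (D.Y k x j)) = 0
    rw [D.Y_supp k x (j+1) (by omega), D.Y_supp k x j hj,
      map_zero, map_zero, add_zero, hs (j+1) (by omega), sub_zero]

theorem downSteps_spec (k : ℕ) (x : ∀ i, D.A i)
    (hx : D.toCartanComplexData.Closed x)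
    (hs : ∀ i, k + 2 ≤ i → x i = 0) :
    D.toCartanComplexData.Closed (D.downSteps k x) ∧
    (∀ i, 1 ≤ i → D.downSteps k x i = 0) ∧
    D.toCartanComplexData.Exact (fun i => x i - D.downSteps k x i) := by
  induction k generalizing x with
  | zero =>
    exact ⟨D.step_closed 0 x hx, D.step_reduce 0 x hx hs, D.step_exact 0 x⟩
  | succ k ih =>
    have h1 := D.step_closed (k+1) x hx
    have h2 : ∀ i, k + 2 ≤ i → D.step (k+1) x i = 0 :=
      D.step_reduce (k+1) x hx hs
    obtain ⟨c1, c2, c3⟩ := ih (D.step (k+1) x) h1 h2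
    have hds : D.downSteps (k+1) x = D.downSteps k (D.step (k+1) x) := rfl
    refine ⟨by rw [hds]; exact c1, by rw [hds]; exact c2, ?_⟩
    have := CartanComplexData.Exact.add' D.toCartanComplexData
      (D.step_exact (k+1) x) c3
    have heq : (fun i => x i - D.downSteps (k+1) x i)
        = fun i => (x i - D.step (k+1) x i)
            + (D.step (k+1) x i - D.downSteps k (D.step (k+1) x) i) := by
      funext i
      rw [hds, sub_add_sub_cancel]
    rw [heq]
    exact this

end CartanPrincipalData

/-- `φ` preserves closed forms and lowers the maximal symmetric
degree by at least one; hence the stabilising infinite product `Φ` is well-defined,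
induces the identity on equivariant cohomology, and takes values in the closed basic
forms. -/
theorem stabilising_retraction_onto_basic (D : CartanPrincipalData) :
    (∀ k x, D.toCartanComplexData.Closed x →
        D.toCartanComplexData.Closed (D.step k x) ∧
        D.toCartanComplexData.Exact (fun i => x i - D.step k x i) ∧
        ((∀ i, k + 1 ≤ i → x i = 0) → ∀ i, k + 1 ≤ i → D.step k x i = 0)) ∧
    (∃ Φ : (∀ i, D.A i) → (∀ i, D.A i),
      ∀ x, D.toCartanComplexData.FinSupp x → D.toCartanComplexData.Closed x →
        (∀ i, 1 ≤ i → Φ x i = 0) ∧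
        D.d 0 (Φ x 0) = 0 ∧ D.ι 0 (Φ x 0) = 0 ∧
        D.toCartanComplexData.Exact (fun i => x i - Φ x i) ∧
        (∃ N, Φ x = D.downSteps N x)) := by
  classical
  constructor
  · intro k x hx
    exact ⟨D.step_closed k x hx, D.step_exact k x, D.step_supp k x⟩
  · refine ⟨fun x => if h : D.toCartanComplexData.FinSupp x
        then D.downSteps h.choose x else x, ?_⟩
    intro x hfs hx
    beta_reduce
    rw [dif_pos hfs]
    have hsupp : ∀ i, hfs.choose + 2 ≤ i → x i = 0 := fun i hi =>
      hfs.choose_spec i (by omega)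
    obtain ⟨c1, c2, c3⟩ := D.downSteps_spec hfs.choose x hx hsupp
    refine ⟨c2, ?_, ?_, c3, ⟨hfs.choose, rfl⟩⟩
    · exact c1 0
    · have h1 := c1 1
      have : D.toCartanComplexData.Dg (D.downSteps hfs.choose x) 1
          = D.d 1 (D.downSteps hfs.choose x 1) + D.ι 0 (D.downSteps hfs.choose x 0) := rfl
      rw [this, c2 1 le_rfl, map_zero, zero_add] at h1
      exact h1
end
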